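/- arXiv:2012.04133 — 3 statements merged into one kernel-verified Lean document; each statement's English description precedes it below -/
import Mathlib

section
/- (Prediction step containment) Suppose x_{k+1} = A x_k + B u_k + G w_k where x_k = x̂ + E z with |z| ≤ 1, P = E Eᵀ, and wᵀ Q^{−1} w ≤ 1 for Q positive definite. Define x̂⁺ = A x̂ + B u_k. If there exist τ_3, τ_4 ≥ 0 and positive definite P⁺ such that [A E, G]ᵀ (P⁺)^{−1} [A E, G] − diag(τ_3 I, τ_4 Q^{−1}) ⪯ 0 and τ_3 + τ_4 ≤ 1, then (x_{k+1} − x̂⁺)ᵀ (P⁺)^{−1} (x_{k+1} − x̂⁺) ≤ 1. -/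
/-!
Stacking the ellipsoid coordinate `z` and the disturbance `w` into `v = (z, w)` writes the
prediction error as `[A E, G] v`. The linear matrix inequality then bounds its `P⁺⁻¹`-norm by
`τ₃ |z|² + τ₄ wᵀ Q⁻¹ w ≤ τ₃ + τ₄ ≤ 1` (the S-procedure).
-/

open Matrix Filter

noncomputable def opNorm {m n : Type*} [Fintype m] [Fintype n] [DecidableEq n]
    (A : Matrix m n ℝ) : ℝ :=
  ‖LinearMap.toContinuousLinearMap (Matrix.toEuclideanLin A)‖

/-- `M ⪯ 0` : the symmetric matrix `M` is negative semidefinite. -/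
def Matrix.NegSemidef {n : Type*} [Fintype n] (M : Matrix n n ℝ) : Prop :=
  (-M).PosSemidef

namespace Matrix

variable {ι κ μ α : Type*} [Fintype ι] [Fintype κ]

lemma NegSemidef.dotProduct_mulVec_le {M N : Matrix ι ι ℝ} (h : (M - N).NegSemidef)
    (v : ι → ℝ) : v ⬝ᵥ M *ᵥ v ≤ v ⬝ᵥ N *ᵥ v := by
  have hneg := h.dotProduct_mulVec_nonneg v
  simp only [star_trivial, neg_mulVec, sub_mulVec, dotProduct_neg, dotProduct_sub] at hneg
  linarith

lemma dotProduct_transpose_mul_mul_mulVec [CommSemiring α] [Fintype μ] (F : Matrix μ ι α)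
    (R : Matrix μ μ α) (v : ι → α) :
    v ⬝ᵥ (Fᵀ * R * F) *ᵥ v = F *ᵥ v ⬝ᵥ R *ᵥ (F *ᵥ v) := by
  rw [← mulVec_mulVec, ← mulVec_mulVec, dotProduct_mulVec, vecMul_transpose]

lemma sumElim_dotProduct_fromBlocks_mulVec_sumElim [NonUnitalCommSemiring α]
    (M : Matrix ι ι α) (N : Matrix κ κ α) (x : ι → α) (y : κ → α) :
    Sum.elim x y ⬝ᵥ fromBlocks M 0 0 N *ᵥ Sum.elim x y = x ⬝ᵥ M *ᵥ x + y ⬝ᵥ N *ᵥ y := by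
  simp [fromBlocks_mulVec, sumElim_dotProduct_sumElim]

theorem dotProduct_mulVec_le_one_of_fromCols_negSemidef [DecidableEq ι] [Fintype μ]
    {F₁ : Matrix μ ι ℝ} {F₂ : Matrix μ κ ℝ} {R : Matrix μ μ ℝ} {S : Matrix κ κ ℝ}
    {τ₁ τ₂ : ℝ} (hτ₁ : 0 ≤ τ₁) (hτ₂ : 0 ≤ τ₂) (hτ : τ₁ + τ₂ ≤ 1)
    (hlmi : ((fromCols F₁ F₂)ᵀ * R * fromCols F₁ F₂ -
      fromBlocks (τ₁ • (1 : Matrix ι ι ℝ)) 0 0 (τ₂ • S)).NegSemidef)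
    {x : ι → ℝ} {y : κ → ℝ} (hx : x ⬝ᵥ x ≤ 1) (hy : y ⬝ᵥ S *ᵥ y ≤ 1) :
    (F₁ *ᵥ x + F₂ *ᵥ y) ⬝ᵥ R *ᵥ (F₁ *ᵥ x + F₂ *ᵥ y) ≤ 1 :=
  calc (F₁ *ᵥ x + F₂ *ᵥ y) ⬝ᵥ R *ᵥ (F₁ *ᵥ x + F₂ *ᵥ y)
      = Sum.elim x y ⬝ᵥ ((fromCols F₁ F₂)ᵀ * R * fromCols F₁ F₂) *ᵥ Sum.elim x y := by
        rw [dotProduct_transpose_mul_mul_mulVec, fromCols_mulVec_sumElim]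
    _ ≤ Sum.elim x y ⬝ᵥ fromBlocks (τ₁ • (1 : Matrix ι ι ℝ)) 0 0 (τ₂ • S) *ᵥ Sum.elim x y :=
        hlmi.dotProduct_mulVec_le _
    _ = τ₁ * (x ⬝ᵥ x) + τ₂ * (y ⬝ᵥ S *ᵥ y) := by
        rw [sumElim_dotProduct_fromBlocks_mulVec_sumElim, smul_mulVec, smul_mulVec,
          one_mulVec, dotProduct_smul, dotProduct_smul, smul_eq_mul, smul_eq_mul]
    _ ≤ τ₁ * 1 + τ₂ * 1 := by gcongr
    _ ≤ 1 := by linarith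

end Matrix

theorem prediction_step_containment_general {n m w : ℕ}
    (A : Matrix (Fin n) (Fin n) ℝ) (B : Matrix (Fin n) (Fin m) ℝ)
    (G : Matrix (Fin n) (Fin w) ℝ) (E Pplus : Matrix (Fin n) (Fin n) ℝ)
    (Q : Matrix (Fin w) (Fin w) ℝ)
    (x xnext xhat : Fin n → ℝ) (uk : Fin m → ℝ) (z : Fin n → ℝ) (wk : Fin w → ℝ)
    (hz : z ⬝ᵥ z ≤ 1) (hw : wk ⬝ᵥ Q⁻¹.mulVec wk ≤ 1)
    (hx : x = xhat + E.mulVec z)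
    (hdyn : xnext = A.mulVec x + B.mulVec uk + G.mulVec wk)
    (τ₃ τ₄ : ℝ) (hτ₃ : 0 ≤ τ₃) (hτ₄ : 0 ≤ τ₄) (hτ : τ₃ + τ₄ ≤ 1)
    (hlmi : ((Matrix.fromCols (A * E) G)ᵀ * Pplus⁻¹ * Matrix.fromCols (A * E) G -
      Matrix.fromBlocks (τ₃ • (1 : Matrix (Fin n) (Fin n) ℝ)) 0 0
        (τ₄ • Q⁻¹)).NegSemidef) :
    (xnext - (A.mulVec xhat + B.mulVec uk)) ⬝ᵥ
      Pplus⁻¹.mulVec (xnext - (A.mulVec xhat + B.mulVec uk)) ≤ 1 := by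
  have herr : xnext - (A *ᵥ xhat + B *ᵥ uk) = (A * E) *ᵥ z + G *ᵥ wk := by
    rw [hdyn, hx, mulVec_add, ← mulVec_mulVec]
    abel
  rw [herr]
  exact dotProduct_mulVec_le_one_of_fromCols_negSemidef hτ₃ hτ₄ hτ hlmi hz hw

theorem prediction_step_containment {n m w : ℕ}
    (A : Matrix (Fin n) (Fin n) ℝ) (B : Matrix (Fin n) (Fin m) ℝ)
    (G : Matrix (Fin n) (Fin w) ℝ) (E P Pplus : Matrix (Fin n) (Fin n) ℝ)
    (Q : Matrix (Fin w) (Fin w) ℝ)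
    (x xnext xhat u' : Fin n → ℝ) (uk : Fin m → ℝ) (z : Fin n → ℝ) (wk : Fin w → ℝ)
    (hQ : Q.PosDef) (hP : P.PosDef) (hPplus : Pplus.PosDef)
    (hfac : P = E * Eᵀ) (hz : z ⬝ᵥ z ≤ 1) (hw : wk ⬝ᵥ Q⁻¹.mulVec wk ≤ 1)
    (hx : x = xhat + E.mulVec z)
    (hdyn : xnext = A.mulVec x + B.mulVec uk + G.mulVec wk)
    (τ₃ τ₄ : ℝ) (hτ₃ : 0 ≤ τ₃) (hτ₄ : 0 ≤ τ₄) (hτ : τ₃ + τ₄ ≤ 1)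
    (hlmi : ((Matrix.fromCols (A * E) G)ᵀ * Pplus⁻¹ * Matrix.fromCols (A * E) G -
      Matrix.fromBlocks (τ₃ • (1 : Matrix (Fin n) (Fin n) ℝ)) 0 0
        (τ₄ • Q⁻¹)).NegSemidef) :
    (xnext - (A.mulVec xhat + B.mulVec uk)) ⬝ᵥ
      Pplus⁻¹.mulVec (xnext - (A.mulVec xhat + B.mulVec uk)) ≤ 1 :=
  prediction_step_containment_general A B G E Pplus Q x xnext xhat uk z wk hz hw hx hdyn τ₃ τ₄ hτ₃
    hτ₄ hτ hlmi
end

section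
/- Let Γ be an N×N matrix with eigenvalues Λ_1, …, Λ_N and define A_c = (I_N ⊗ A) − c Γ ⊗ (B K). Then ρ(A_c) < 1 if and only if ρ(A − c Λ_i B K) < 1 for all i = 1, …, N. -/
/-!
Write `M = 1 ⊗ A - c • (Γ ⊗ C)` with `C = B K`. If `Γ w = μ w` and `(A - cμC) v = z v`, then
`w ⊗ v` is an eigenvector of `M` for `z`. Conversely, `M` commutes with `Γ ⊗ 1`, so over `ℂ` the
`z`-eigenspace of `M` contains an eigenvector `v` of `Γ ⊗ 1`, say for `μ`. On `v` the factor
`Γ ⊗ C = (1 ⊗ C)(Γ ⊗ 1)` acts as `μ • (1 ⊗ C)`, so `z` is an eigenvalue of `1 ⊗ (A - cμC)`; since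
`X ↦ 1 ⊗ X` and `X ↦ X ⊗ 1` are unital algebra maps, `z ∈ σ(A - cμC)` and `μ ∈ σ(Γ)`.
Hence `σ(M) = ⋃ᵢ σ(A - cΛᵢC)`, and the spectral radii compare accordingly.
-/

open Matrix Filter Kronecker

namespace Module.End

variable {K V : Type*} [Field K] [IsAlgClosed K] [AddCommGroup V] [Module K V]
  [FiniteDimensional K V]

theorem exists_hasEigenvector_of_commute {f g : End K V} (h : Commute f g) {z : K}
    (hz : f.HasEigenvalue z) : ∃ μ v, f.HasEigenvector z v ∧ g.HasEigenvector μ v := by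
  have hE : Set.MapsTo g (f.eigenspace z) (f.eigenspace z) :=
    f.mapsTo_genEigenspace_of_comm h z 1
  have : Nontrivial (f.eigenspace z) := Submodule.nontrivial_iff_ne_bot.mpr hz
  obtain ⟨μ, hμ⟩ := exists_eigenvalue (g.restrict hE)
  obtain ⟨⟨v, hv⟩, hvμ⟩ := hμ.exists_hasEigenvector
  have hv0 : v ≠ 0 := by simpa using hvμ.2
  refine ⟨μ, v, ⟨hv, hv0⟩, ?_, hv0⟩
  exact mem_eigenspace_iff.mpr (congrArg Subtype.val (mem_eigenspace_iff.mp hvμ.1))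

end Module.End

namespace Matrix

section CommRing

variable {R ι κ : Type*} [CommRing R] [Fintype ι] [DecidableEq ι] [Fintype κ] [DecidableEq κ]

def oneKroneckerAlgHom : Matrix κ κ R →ₐ[R] Matrix (ι × κ) (ι × κ) R where
  toFun X := 1 ⊗ₖ X
  map_one' := one_kronecker_one
  map_mul' X Y := by rw [← mul_kronecker_mul, Matrix.one_mul]
  map_zero' := kronecker_zero _
  map_add' := kronecker_add _
  commutes' z := by simp only [Algebra.algebraMap_eq_smul_one, kronecker_smul, one_kronecker_one]

def kroneckerOneAlgHom : Matrix ι ι R →ₐ[R] Matrix (ι × κ) (ι × κ) R where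
  toFun X := X ⊗ₖ 1
  map_one' := one_kronecker_one
  map_mul' X Y := by rw [← mul_kronecker_mul, Matrix.one_mul]
  map_zero' := zero_kronecker _
  map_add' X Y := add_kronecker X Y _
  commutes' z := by simp only [Algebra.algebraMap_eq_smul_one, smul_kronecker, one_kronecker_one]

theorem spectrum_one_kronecker_subset (X : Matrix κ κ R) :
    spectrum R ((1 : Matrix ι ι R) ⊗ₖ X) ⊆ spectrum R X :=
  AlgHom.spectrum_apply_subset oneKroneckerAlgHom X

theorem spectrum_kronecker_one_subset (X : Matrix ι ι R) :
    spectrum R (X ⊗ₖ (1 : Matrix κ κ R)) ⊆ spectrum R X :=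
  AlgHom.spectrum_apply_subset kroneckerOneAlgHom X

end CommRing

variable {K ι κ : Type*} [Field K] [Fintype ι] [DecidableEq ι] [Fintype κ] [DecidableEq κ]

theorem mem_spectrum_iff_exists_mulVec_eq_smul {M : Matrix ι ι K} {z : K} :
    z ∈ spectrum K M ↔ ∃ v : ι → K, v ≠ 0 ∧ M *ᵥ v = z • v := by
  rw [← spectrum_toLin', ← Module.End.hasEigenvalue_iff_mem_spectrum]
  constructor
  · intro hz
    obtain ⟨v, hv, hv0⟩ := hz.exists_hasEigenvector
    exact ⟨v, hv0, by simpa [Module.End.mem_eigenspace_iff] using hv⟩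
  · rintro ⟨v, hv0, hv⟩
    exact Module.End.hasEigenvalue_of_hasEigenvector
      ⟨by simpa [Module.End.mem_eigenspace_iff] using hv, hv0⟩

theorem exists_mulVec_eq_smul_of_commute [IsAlgClosed K] {M P : Matrix ι ι K}
    (h : Commute M P) {z : K} (hz : z ∈ spectrum K M) :
    ∃ μ : K, ∃ v : ι → K, v ≠ 0 ∧ M *ᵥ v = z • v ∧ P *ᵥ v = μ • v := by
  rw [← spectrum_toLin', ← Module.End.hasEigenvalue_iff_mem_spectrum] at hz
  obtain ⟨μ, v, ⟨hMv, hv0⟩, hPv, -⟩ :=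
    Module.End.exists_hasEigenvector_of_commute (h.map toLinAlgEquiv') hz
  simp only [Module.End.mem_eigenspace_iff] at hMv hPv
  exact ⟨μ, v, hv0, by simpa using hMv, by simpa using hPv⟩

theorem spectrum_sub_smul_subset_spectrum_one_kronecker_sub_smul_kronecker
    (A C : Matrix κ κ K) (Γ : Matrix ι ι K) (c : K) {μ : K} (hμ : μ ∈ spectrum K Γ) :
    spectrum K (A - (c * μ) • C) ⊆ spectrum K (1 ⊗ₖ A - c • (Γ ⊗ₖ C)) := by
  intro z hz
  obtain ⟨v, hv0, hv⟩ := mem_spectrum_iff_exists_mulVec_eq_smul.mp hz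
  obtain ⟨w, hw0, hw⟩ := mem_spectrum_iff_exists_mulVec_eq_smul.mp hμ
  have hvw : vec (vecMulVec v w) ≠ 0 := by
    obtain ⟨i, hi⟩ := Function.ne_iff.mp hv0
    obtain ⟨j, hj⟩ := Function.ne_iff.mp hw0
    exact Function.ne_iff.mpr ⟨(j, i), mul_ne_zero hi hj⟩
  refine mem_spectrum_iff_exists_mulVec_eq_smul.mpr ⟨vec (vecMulVec v w), hvw, ?_⟩
  have hwT : w ᵥ* Γᵀ = μ • w := by rw [vecMul_transpose, hw]
  rw [sub_mulVec, smul_mulVec, kronecker_mulVec_vec, kronecker_mulVec_vec, transpose_one,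
    Matrix.mul_one, mul_vecMulVec, mul_vecMulVec, vecMulVec_mul, hwT, ← vec_smul, ← vec_sub,
    ← vec_smul]
  congr 1
  ext i j
  have hvi := congrFun hv i
  simp only [sub_mulVec, smul_mulVec, Pi.sub_apply, Pi.smul_apply, smul_eq_mul] at hvi
  simp only [sub_apply, smul_apply, vecMulVec_apply, Pi.smul_apply, smul_eq_mul]
  linear_combination w j * hvi

theorem spectrum_one_kronecker_sub_smul_kronecker_subset [IsAlgClosed K]
    (A C : Matrix κ κ K) (Γ : Matrix ι ι K) (c : K) :
    spectrum K (1 ⊗ₖ A - c • (Γ ⊗ₖ C)) ⊆ ⋃ μ ∈ spectrum K Γ, spectrum K (A - (c * μ) • C) := by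
  intro z hz
  have hfactor : Γ ⊗ₖ C = (1 ⊗ₖ C) * (Γ ⊗ₖ (1 : Matrix κ κ K)) := by
    rw [← mul_kronecker_mul, Matrix.one_mul, Matrix.mul_one]
  have hcomm : Commute (1 ⊗ₖ A - c • (Γ ⊗ₖ C)) (Γ ⊗ₖ 1) := by
    refine .sub_left ?_ (.smul_left ?_ c) <;>
      simp only [Commute, SemiconjBy, ← mul_kronecker_mul, Matrix.one_mul, Matrix.mul_one]
  obtain ⟨μ, v, hv0, hMv, hPv⟩ := exists_mulVec_eq_smul_of_commute hcomm hz
  have hμ : μ ∈ spectrum K Γ :=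
    spectrum_kronecker_one_subset Γ (mem_spectrum_iff_exists_mulVec_eq_smul.mpr ⟨v, hv0, hPv⟩)
  have hv : (1 ⊗ₖ (A - (c * μ) • C)) *ᵥ v = z • v := by
    change oneKroneckerAlgHom (A - (c * μ) • C) *ᵥ v = z • v
    rw [map_sub, map_smul]
    change (1 ⊗ₖ A - (c * μ) • (1 ⊗ₖ C)) *ᵥ v = z • v
    rw [← hMv, hfactor, sub_mulVec, sub_mulVec, smul_mulVec, smul_mulVec, ← mulVec_mulVec, hPv,
      mulVec_smul, smul_smul]
  exact Set.mem_biUnion hμ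
    (spectrum_one_kronecker_subset _ (mem_spectrum_iff_exists_mulVec_eq_smul.mpr ⟨v, hv0, hv⟩))

theorem spectrum_one_kronecker_sub_smul_kronecker [IsAlgClosed K]
    (A C : Matrix κ κ K) (Γ : Matrix ι ι K) (c : K) :
    spectrum K (1 ⊗ₖ A - c • (Γ ⊗ₖ C)) = ⋃ μ ∈ spectrum K Γ, spectrum K (A - (c * μ) • C) :=
  (spectrum_one_kronecker_sub_smul_kronecker_subset A C Γ c).antisymm <|
    Set.iUnion₂_subset fun _ hμ ↦
      spectrum_sub_smul_subset_spectrum_one_kronecker_sub_smul_kronecker A C Γ c hμ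

theorem map_one_kronecker_sub_smul_kronecker {R S ι κ : Type*} [CommRing R] [CommRing S]
    [DecidableEq ι] (f : R →+* S)
    (A C : Matrix κ κ R) (Γ : Matrix ι ι R) (c : R) :
    (1 ⊗ₖ A - c • (Γ ⊗ₖ C)).map f = 1 ⊗ₖ A.map f - f c • (Γ.map f ⊗ₖ C.map f) := by
  ext ⟨i, p⟩ ⟨j, q⟩
  simp only [map_apply, sub_apply, smul_apply, kroneckerMap_apply, one_apply, smul_eq_mul]
  split_ifs <;> simp

end Matrix

theorem spectral_radius_Ac_iff_general {n m N : ℕ}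
    (A : Matrix (Fin n) (Fin n) ℝ) (B : Matrix (Fin n) (Fin m) ℝ)
    (K : Matrix (Fin m) (Fin n) ℝ) (c : ℝ)
    (Γ : Matrix (Fin N) (Fin N) ℝ) (Λ : Fin N → ℂ)
    (hΛ : spectrum ℂ (Γ.map (algebraMap ℝ ℂ)) = Set.range Λ) :
    spectralRadius ℂ
        ((((1 : Matrix (Fin N) (Fin N) ℝ) ⊗ₖ A) - c • (Γ ⊗ₖ (B * K))).map
          (algebraMap ℝ ℂ)) < 1 ↔
      ∀ i : Fin N,
        spectralRadius ℂ
          (A.map (algebraMap ℝ ℂ) -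
            ((c : ℂ) * Λ i) • ((B * K).map (algebraMap ℝ ℂ))) < 1 := by
  have hspec : spectrum ℂ ((((1 : Matrix (Fin N) (Fin N) ℝ) ⊗ₖ A) - c • (Γ ⊗ₖ (B * K))).map
      (algebraMap ℝ ℂ)) = ⋃ i, spectrum ℂ (A.map (algebraMap ℝ ℂ) -
        ((c : ℂ) * Λ i) • ((B * K).map (algebraMap ℝ ℂ))) := by
    rw [map_one_kronecker_sub_smul_kronecker, spectrum_one_kronecker_sub_smul_kronecker,
      hΛ, Set.biUnion_range, Complex.coe_algebraMap]
  rw [spectralRadius, hspec, iSup_iUnion, ← Finset.sup_univ_eq_iSup,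
    Finset.sup_lt_iff zero_lt_one]
  simp only [Finset.mem_univ, true_implies, spectralRadius]

theorem spectral_radius_Ac_iff {n m N : ℕ}
    (A : Matrix (Fin n) (Fin n) ℝ) (B : Matrix (Fin n) (Fin m) ℝ)
    (K : Matrix (Fin m) (Fin n) ℝ) (c : ℝ) (hc : 0 < c)
    (Γ : Matrix (Fin N) (Fin N) ℝ) (Λ : Fin N → ℂ)
    (hΛ : spectrum ℂ (Γ.map (algebraMap ℝ ℂ)) = Set.range Λ) :
    spectralRadius ℂ
        ((((1 : Matrix (Fin N) (Fin N) ℝ) ⊗ₖ A) - c • (Γ ⊗ₖ (B * K))).map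
          (algebraMap ℝ ℂ)) < 1 ↔
      ∀ i : Fin N,
        spectralRadius ℂ
          (A.map (algebraMap ℝ ℂ) -
            ((c : ℂ) * Λ i) • ((B * K).map (algebraMap ℝ ℂ))) < 1 :=
  spectral_radius_Ac_iff_general A B K c Γ Λ hΛ
end

section
/- (Discrete Lyapunov stability) Let M be an n×n real matrix and suppose there exist symmetric positive definite matrices P and Q with Mᵀ P M − P = −Q. Then the spectral radius of M is strictly less than 1. -/
/-!
If `M v = μ v` with `v ≠ 0` complex, the Lyapunov equation gives
`v* Q v = (1 - |μ|²) v* P v`. Both Hermitian forms are positive, because complexifying a real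
positive definite matrix keeps it positive definite (`v* P v = aᵀ P a + bᵀ P b` for
`v = a + i b`), so `|μ| < 1`. A matrix has finitely many eigenvalues, so its spectral radius is
a maximum of such `|μ|` and is `< 1` as well.
-/

open Matrix Filter Kronecker

open scoped NNReal ComplexOrder

theorem spectralRadius_lt_of_forall_lt_of_finite {𝕜 A : Type*} [NormedField 𝕜] [Ring A]
    [Algebra 𝕜 A] {a : A} (ha : (spectrum 𝕜 a).Finite) {r : ℝ≥0} (hr₀ : 0 < r)
    (hr : ∀ z ∈ spectrum 𝕜 a, ‖z‖₊ < r) : spectralRadius 𝕜 a < r := by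
  rw [spectralRadius, ← ha.coe_toFinset]
  simp only [Finset.mem_coe]
  rw [← Finset.sup_eq_iSup, Finset.sup_lt_iff (ENNReal.coe_pos.2 hr₀)]
  simpa using hr

namespace Matrix

variable {ι : Type*} [Fintype ι]

theorem exists_mulVec_eq_smul_of_mem_spectrum {K : Type*} [Field K] [DecidableEq ι]
    {A : Matrix ι ι K} {μ : K} (hμ : μ ∈ spectrum K A) : ∃ v ≠ 0, A *ᵥ v = μ • v := by
  rw [← spectrum_toLin', ← Module.End.hasEigenvalue_iff_mem_spectrum] at hμ
  obtain ⟨v, hv⟩ := hμ.exists_hasEigenvector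
  exact ⟨v, hv.2, by simpa using hv.apply_eq_smul⟩

theorem re_star_dotProduct_map_algebraMap_mulVec {𝕜 : Type*} [RCLike 𝕜] (P : Matrix ι ι ℝ)
    (x : ι → 𝕜) :
    RCLike.re (star x ⬝ᵥ (P.map (algebraMap ℝ 𝕜) *ᵥ x)) =
      (fun i ↦ RCLike.re (x i)) ⬝ᵥ (P *ᵥ fun i ↦ RCLike.re (x i)) +
        (fun i ↦ RCLike.im (x i)) ⬝ᵥ (P *ᵥ fun i ↦ RCLike.im (x i)) := by
  simp only [dotProduct, mulVec, Pi.star_apply, RCLike.star_def, Finset.mul_sum, map_sum,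
    RCLike.mul_re, RCLike.mul_im, RCLike.conj_re, RCLike.conj_im, Matrix.map_apply,
    RCLike.algebraMap_eq_ofReal, RCLike.ofReal_re, RCLike.ofReal_im, ← Finset.sum_add_distrib]
  refine Finset.sum_congr rfl fun i _ ↦ Finset.sum_congr rfl fun j _ ↦ ?_
  ring

theorem PosDef.map_algebraMap {𝕜 : Type*} [RCLike 𝕜] {P : Matrix ι ι ℝ} (hP : P.PosDef) :
    (P.map (algebraMap ℝ 𝕜)).PosDef := by
  have hherm : (P.map (algebraMap ℝ 𝕜)).IsHermitian :=
    hP.isHermitian.map _ fun r ↦ by simp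
  refine .of_dotProduct_mulVec_pos hherm fun x hx ↦ RCLike.pos_iff.2 ⟨?_, ?_⟩
  · set a : ι → ℝ := fun i ↦ RCLike.re (x i)
    set b : ι → ℝ := fun i ↦ RCLike.im (x i)
    have ha := hP.posSemidef.dotProduct_mulVec_nonneg a
    have hb := hP.posSemidef.dotProduct_mulVec_nonneg b
    simp only [star_trivial] at ha hb
    rw [re_star_dotProduct_map_algebraMap_mulVec]
    by_cases ha₀ : a = 0
    · have hb₀ : b ≠ 0 := fun hb₀ ↦ hx <| funext fun i ↦
        RCLike.ext (by simpa using congrFun ha₀ i) (by simpa using congrFun hb₀ i)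
      simpa using add_lt_add_of_le_of_lt ha (hP.dotProduct_mulVec_pos hb₀)
    · simpa using add_lt_add_of_lt_of_le (hP.dotProduct_mulVec_pos ha₀) hb
  · exact hherm.im_star_dotProduct_mulVec_self x

theorem norm_lt_one_of_mem_spectrum_of_lyapunov {𝕜 : Type*} [RCLike 𝕜] [DecidableEq ι]
    {A P Q : Matrix ι ι 𝕜} (hP : P.PosDef) (hQ : Q.PosDef) (h : Aᴴ * P * A - P = -Q)
    {μ : 𝕜} (hμ : μ ∈ spectrum 𝕜 A) : ‖μ‖ < 1 := by
  obtain ⟨v, hv, hAv⟩ := exists_mulVec_eq_smul_of_mem_spectrum hμ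
  have hquad : star v ⬝ᵥ ((Aᴴ * P * A) *ᵥ v) = star (A *ᵥ v) ⬝ᵥ (P *ᵥ (A *ᵥ v)) := by
    rw [← mulVec_mulVec, ← mulVec_mulVec, dotProduct_mulVec, ← star_mulVec]
  have hQv : star v ⬝ᵥ (Q *ᵥ v) = (1 - ‖μ‖ ^ 2 : ℝ) * star v ⬝ᵥ (P *ᵥ v) := by
    rw [show Q = P - Aᴴ * P * A by rw [← neg_sub, h, neg_neg], sub_mulVec, dotProduct_sub,
      hquad, hAv, star_smul, mulVec_smul, smul_dotProduct, dotProduct_smul, smul_eq_mul,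
      smul_eq_mul, ← mul_assoc, RCLike.star_def, RCLike.conj_mul]
    push_cast
    ring
  have hre : 0 < (1 - ‖μ‖ ^ 2) * RCLike.re (star v ⬝ᵥ (P *ᵥ v)) := by
    simpa only [hQv, RCLike.re_ofReal_mul] using hQ.re_dotProduct_pos hv
  have hμ2 : ‖μ‖ ^ 2 < 1 := by
    linarith [(mul_pos_iff_of_pos_right (hP.re_dotProduct_pos hv)).1 hre]
  exact (sq_lt_one_iff₀ (norm_nonneg μ)).1 hμ2

end Matrix

theorem discrete_lyapunov_stability {n : ℕ}
    (M P Q : Matrix (Fin n) (Fin n) ℝ) (hP : P.PosDef) (hQ : Q.PosDef)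
    (hlyap : Mᵀ * P * M - P = -Q) :
    spectralRadius ℂ (M.map (algebraMap ℝ ℂ)) < 1 := by
  have hlyapℂ : (M.map (algebraMap ℝ ℂ))ᴴ * P.map (algebraMap ℝ ℂ) * M.map (algebraMap ℝ ℂ) -
      P.map (algebraMap ℝ ℂ) = -Q.map (algebraMap ℝ ℂ) := by
    rw [← conjTranspose_map _ fun r ↦ by simp, conjTranspose_eq_transpose_of_trivial]
    simpa only [map_sub, map_neg, map_mul, RingHom.mapMatrix_apply] using
      congrArg (algebraMap ℝ ℂ).mapMatrix hlyap
  simpa using spectralRadius_lt_of_forall_lt_of_finite (Matrix.finite_spectrum _) one_pos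
    fun μ hμ ↦ mod_cast norm_lt_one_of_mem_spectrum_of_lyapunov hP.map_algebraMap
      hQ.map_algebraMap hlyapℂ hμ
end
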